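/- arXiv:1004.4953 — 8 statements merged into one kernel-verified Lean document; each statement's English description precedes it below -/
import Mathlib

section
/- Let m ≥ 3 and n ≥ 1, and let A be the diagonal order-m tensor of format n×⋯×n defined by a_{i i … i} = 1 for all i and all other entries zero. Then the set of equivalence classes of eigenpairs of A is finite and has exactly ((m-1)^n - 1)/(m-2) elements. -/
/-! An eigenpair `(λ, x)` of the diagonal tensor satisfies `x_j ^ (m-1) = λ x_j` for all `j`, so
`λ ≠ 0`, and rescaling by an `(m-2)`-th root of `λ⁻¹` makes `λ = 1`. The eigenvectors for `λ = 1`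
are the nonzero vectors whose coordinates are `0` or `(m-2)`-th roots of unity, `(m-1)^n - 1` of
them, and two of them are equivalent exactly when they differ by an `(m-2)`-th root of unity. That
group of `m - 2` roots acts freely, so there are `((m-1)^n - 1)/(m-2)` orbits. -/

open Finset

/-- The contraction `A x^{m-1}` of an order-`m` tensor of format `n × ⋯ × n`
with the vector `x ∈ ℂⁿ`. -/
noncomputable def tApply (m n : ℕ) (A : (Fin m → Fin n) → ℂ) (x : Fin n → ℂ) :
    Fin n → ℂ :=
  fun j => ∑ i : Fin (m - 1) → Fin n,
    A (fun k => if hk : (k : ℕ) = 0 then j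
        else i ⟨(k : ℕ) - 1, by have := k.isLt; omega⟩) * ∏ l, x (i l)

/-- `(λ, x)` is an eigenpair of `A` : `x ≠ 0` and `A x^{m-1} = λ x`. -/
def IsEigenpair (m n : ℕ) (A : (Fin m → Fin n) → ℂ) (p : ℂ × (Fin n → ℂ)) : Prop :=
  p.2 ≠ 0 ∧ tApply m n A p.2 = p.1 • p.2

/-- Equivalence of eigenpairs. -/
def EigEquiv (m n : ℕ) (p q : ℂ × (Fin n → ℂ)) : Prop :=
  ∃ t : ℂ, t ≠ 0 ∧ t ^ (m - 2) * p.1 = q.1 ∧ t • p.2 = q.2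

/-- The set (type) of equivalence classes of eigenpairs of the tensor `A`. -/
def EigClasses (m n : ℕ) (A : (Fin m → Fin n) → ℂ) : Type :=
  Quot (fun p q : {p : ℂ × (Fin n → ℂ) // IsEigenpair m n A p} => EigEquiv m n p.1 q.1)

/-- The diagonal tensor with `a_{i i ⋯ i} = 1` and all other entries `0`. -/
noncomputable def diagTensor (m n : ℕ) : (Fin m → Fin n) → ℂ :=
  fun i => if ∀ k l, i k = i l then 1 else 0

theorem tApply_diagTensor (m n : ℕ) (x : Fin n → ℂ) (j : Fin n) :
    tApply m n (diagTensor m n) x j = x j ^ (m - 1) := by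
  unfold tApply
  calc _ = ∑ i : Fin (m - 1) → Fin n, if i = (fun _ => j) then ∏ l, x (i l) else 0 := by
        refine sum_congr rfl fun i _ => ?_
        unfold diagTensor
        by_cases hi : i = fun _ => j
        · subst hi
          rw [if_pos (fun k l => by dsimp only; split_ifs <;> rfl), one_mul, if_pos rfl]
        · rw [if_neg hi, if_neg, zero_mul]
          intro hconst
          refine hi (funext fun l => ?_)
          simpa using hconst ⟨l + 1, by have := l.isLt; omega⟩ ⟨0, by have := l.isLt; omega⟩
    _ = x j ^ (m - 1) := by simp

theorem tApply_smul (m n : ℕ) (A : (Fin m → Fin n) → ℂ) (t : ℂ) (x : Fin n → ℂ) :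
    tApply m n A (t • x) = t ^ (m - 1) • tApply m n A x := by
  ext j
  simp only [tApply, Pi.smul_apply, smul_eq_mul, prod_mul_distrib, prod_const, card_univ,
    Fintype.card_fin, mul_sum]
  exact sum_congr rfl fun i _ => by ring

theorem isEigenpair_diagTensor_iff {m n : ℕ} {p : ℂ × (Fin n → ℂ)} :
    IsEigenpair m n (diagTensor m n) p ↔ p.2 ≠ 0 ∧ ∀ j, p.2 j ^ (m - 1) = p.1 * p.2 j := by
  simp only [IsEigenpair, funext_iff, tApply_diagTensor, Pi.smul_apply, smul_eq_mul]

theorem eigEquiv_equivalence (m n : ℕ) : Equivalence (EigEquiv m n) where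
  refl p := ⟨1, one_ne_zero, by simp, by simp⟩
  symm := by
    rintro p q ⟨t, ht, hval, hvec⟩
    refine ⟨t⁻¹, inv_ne_zero ht, ?_, ?_⟩
    · rw [← hval, ← mul_assoc, ← mul_pow, inv_mul_cancel₀ ht, one_pow, one_mul]
    · rw [← hvec, smul_smul, inv_mul_cancel₀ ht, one_smul]
  trans := by
    rintro p q r ⟨s, hs, hvals, hvecs⟩ ⟨t, ht, hvalt, hvect⟩
    refine ⟨t * s, mul_ne_zero ht hs, ?_, ?_⟩
    · rw [← hvalt, ← hvals, mul_pow, mul_assoc]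
    · rw [← hvect, ← hvecs, mul_smul]

def EigClasses.mk {m n : ℕ} {A : (Fin m → Fin n) → ℂ} (p : ℂ × (Fin n → ℂ))
    (hp : IsEigenpair m n A p) : EigClasses m n A :=
  Quot.mk _ ⟨p, hp⟩

theorem EigClasses.mk_eq_mk_iff {m n : ℕ} {A : (Fin m → Fin n) → ℂ} {p q : ℂ × (Fin n → ℂ)}
    {hp : IsEigenpair m n A p} {hq : IsEigenpair m n A q} :
    EigClasses.mk p hp = EigClasses.mk q hq ↔ EigEquiv m n p q :=
  ⟨fun h => (InvImage.equivalence _ Subtype.val (eigEquiv_equivalence m n)).eqvGen_iff.1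
    (Quot.eqvGen_exact h), fun h => Quot.sound h⟩

theorem IsEigenpair.of_eigEquiv {m n : ℕ} (hm : 2 ≤ m) {A : (Fin m → Fin n) → ℂ}
    {p q : ℂ × (Fin n → ℂ)} (hp : IsEigenpair m n A p) (hpq : EigEquiv m n p q) :
    IsEigenpair m n A q := by
  obtain ⟨μ, x⟩ := p
  obtain ⟨ν, y⟩ := q
  obtain ⟨t, ht, hval, hvec⟩ := hpq
  dsimp only at hval hvec
  subst hval hvec
  refine ⟨smul_ne_zero ht hp.1, ?_⟩
  rw [tApply_smul, hp.2, smul_smul, smul_smul, show m - 1 = m - 2 + 1 by omega, pow_succ]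
  ring_nf

-- The order `m` is written `d + 2`, so that `m - 2 = d` and `m - 1 = d + 1` are free of truncation.
section

variable (d n : ℕ)

def unitEigenvectors : SubMulAction (rootsOfUnity d ℂ) (Fin n → ℂ) where
  carrier := {x | x ≠ 0 ∧ ∀ j, x j ^ (d + 1) = x j}
  smul_mem' := by
    rintro g x ⟨hx0, hx⟩
    have hg : ((g : ℂˣ) : ℂ) ^ d = 1 := (mem_rootsOfUnity' d _).1 g.2
    refine ⟨smul_ne_zero (g : ℂˣ).ne_zero hx0, fun j => ?_⟩
    change (((g : ℂˣ) : ℂ) * x j) ^ (d + 1) = ((g : ℂˣ) : ℂ) * x j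
    rw [mul_pow, hx j, pow_succ, hg, one_mul]

variable {d n} in
theorem mem_unitEigenvectors {x : Fin n → ℂ} :
    x ∈ unitEigenvectors d n ↔ x ≠ 0 ∧ ∀ j, x j ^ (d + 1) = x j :=
  Iff.rfl

variable {d n} in
theorem isEigenpair_one_iff_mem_unitEigenvectors {x : Fin n → ℂ} :
    IsEigenpair (d + 2) n (diagTensor (d + 2) n) (1, x) ↔ x ∈ unitEigenvectors d n := by
  simp [isEigenpair_diagTensor_iff, mem_unitEigenvectors]

theorem coe_unitEigenvectors [NeZero d] :
    (unitEigenvectors d n : Set (Fin n → ℂ)) =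
      ((Fintype.piFinset fun _ => insert 0 (Polynomial.nthRootsFinset d (1 : ℂ))).erase 0 :
        Finset (Fin n → ℂ)) := by
  ext x
  have hroot : ∀ z : ℂ, z ^ (d + 1) = z ↔ z = 0 ∨ z ^ d = 1 := fun z => by
    rcases eq_or_ne z 0 with rfl | hz
    · simp
    · simp [hz, pow_succ, mul_eq_right₀ hz]
  simp [mem_unitEigenvectors, hroot, Polynomial.mem_nthRootsFinset (NeZero.pos d), and_comm]

instance [NeZero d] : Finite (unitEigenvectors d n) := by
  rw [← SetLike.coe_sort_coe, coe_unitEigenvectors]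
  infer_instance

theorem card_unitEigenvectors [NeZero d] :
    Nat.card (unitEigenvectors d n) = (d + 1) ^ n - 1 := by
  have h0 : (0 : ℂ) ∉ Polynomial.nthRootsFinset d (1 : ℂ) := by
    simp [Polynomial.mem_nthRootsFinset (NeZero.pos d), NeZero.ne d]
  rw [← SetLike.coe_sort_coe, coe_unitEigenvectors, Finset.coe_sort_coe, Nat.card_eq_finsetCard,
    card_erase_of_mem (by simp), Fintype.card_piFinset_const, card_insert_of_notMem h0,
    (Complex.isPrimitiveRoot_exp d (NeZero.ne d)).card_nthRootsFinset]

theorem stabilizer_unitEigenvectors (x : unitEigenvectors d n) :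
    MulAction.stabilizer (rootsOfUnity d ℂ) x = ⊥ := by
  refine (Subgroup.eq_bot_iff_forall _).2 fun g hg => ?_
  obtain ⟨j, hj⟩ := Function.ne_iff.1 x.2.1
  have hgx : ((g : ℂˣ) : ℂ) * x.1 j = x.1 j := congrFun (congrArg Subtype.val hg) j
  exact Subtype.ext (Units.ext ((mul_eq_right₀ hj).1 hgx))

theorem card_orbitRel_quotient_unitEigenvectors [NeZero d] :
    Nat.card (MulAction.orbitRel.Quotient (rootsOfUnity d ℂ) (unitEigenvectors d n)) * d =
      (d + 1) ^ n - 1 := by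
  rw [← card_unitEigenvectors,
    Nat.card_congr (MulAction.selfEquivOrbitsQuotientProd (stabilizer_unitEigenvectors d n)),
    Nat.card_prod, Complex.card_rootsOfUnity]

noncomputable def orbitToEigClass :
    MulAction.orbitRel.Quotient (rootsOfUnity d ℂ) (unitEigenvectors d n) →
      EigClasses (d + 2) n (diagTensor (d + 2) n) :=
  Quotient.lift (fun x => EigClasses.mk (1, x) (isEigenpair_one_iff_mem_unitEigenvectors.2 x.2))
    fun x y hxy => by
      obtain ⟨g, rfl⟩ := MulAction.orbitRel_apply.1 hxy
      refine (EigClasses.mk_eq_mk_iff.2 ⟨(g : ℂˣ), Units.ne_zero _, ?_, rfl⟩).symm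
      simpa using (mem_rootsOfUnity' d _).1 g.2

theorem orbitToEigClass_injective [NeZero d] : Function.Injective (orbitToEigClass d n) := by
  intro a b hab
  induction a using Quotient.inductionOn with | h x => ?_
  induction b using Quotient.inductionOn with | h y => ?_
  obtain ⟨t, ht, hval, hvec⟩ := EigClasses.mk_eq_mk_iff.1 hab.symm
  refine Quotient.sound (MulAction.orbitRel_apply.2 ⟨rootsOfUnity.mkOfPowEq t ?_, Subtype.ext hvec⟩)
  simpa using hval

theorem orbitToEigClass_surjective [NeZero d] : Function.Surjective (orbitToEigClass d n) := by
  refine Quot.ind fun ⟨⟨μ, x⟩, hp⟩ => ?_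
  obtain ⟨hx0, hx⟩ := isEigenpair_diagTensor_iff.1 hp
  have hμ : μ ≠ 0 := by
    rintro rfl
    obtain ⟨j, hj⟩ := Function.ne_iff.1 hx0
    exact hj (by simpa using hx j)
  obtain ⟨t, ht⟩ := IsAlgClosed.exists_pow_nat_eq μ⁻¹ (NeZero.pos d)
  have ht0 : t ≠ 0 := by
    rintro rfl
    exact inv_ne_zero hμ (by simpa [NeZero.ne d] using ht.symm)
  have hequiv : EigEquiv (d + 2) n (μ, x) (1, t • x) :=
    ⟨t, ht0, by simp [ht, hμ], rfl⟩
  have hmem : t • x ∈ unitEigenvectors d n :=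
    isEigenpair_one_iff_mem_unitEigenvectors.1 (hp.of_eigEquiv (by omega) hequiv)
  exact ⟨⟦⟨t • x, hmem⟩⟧, (EigClasses.mk_eq_mk_iff.2 hequiv).symm⟩

end

theorem diag_eigenpair_classes_card_general (m n : ℕ) (hm : 3 ≤ m) :
    Finite (EigClasses m n (diagTensor m n)) ∧
      Nat.card (EigClasses m n (diagTensor m n)) = ((m - 1) ^ n - 1) / (m - 2) := by
  obtain ⟨d, rfl⟩ : ∃ d, m = d + 2 := ⟨m - 2, by omega⟩
  have : NeZero d := ⟨by omega⟩
  have hbij := And.intro (orbitToEigClass_injective d n) (orbitToEigClass_surjective d n)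
  refine ⟨Finite.of_surjective _ hbij.2, ?_⟩
  rw [← Nat.card_eq_of_bijective _ hbij, Nat.add_sub_cancel, show d + 2 - 1 = d + 1 by omega]
  exact (Nat.div_eq_of_eq_mul_left (NeZero.pos d)
    (card_orbitRel_quotient_unitEigenvectors d n).symm).symm

/-- The diagonal tensor has exactly `((m-1)^n - 1)/(m-2)` equivalence classes
of eigenpairs. -/
theorem diag_eigenpair_classes_card (m n : ℕ) (hm : 3 ≤ m) (hn : 1 ≤ n) :
    Finite (EigClasses m n (diagTensor m n)) ∧
      Nat.card (EigClasses m n (diagTensor m n)) = ((m - 1) ^ n - 1) / (m - 2) :=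
  diag_eigenpair_classes_card_general m n hm
end

section
/- Consider the complex 2×2×2 tensor A whose nonzero entries are a₁₁₁ = a₂₂₁ = 1 and a₁₁₂ = a₂₂₂ = i, so that Ax² = (x₁² + i x₁x₂, x₁x₂ + i x₂²). Then: (1) for every complex number λ ≠ 0, there exists x ∈ ℂ² with x₁² + i x₁x₂ = λx₁, x₁x₂ + i x₂² = λx₂, and x₁² + x₂² = 1 (indeed x = ((λ²+1)/(2λ), (λ²−1)/(2iλ)) works); and (2) there is no x ∈ ℂ² with x₁² + i x₁x₂ = 0, x₁x₂ + i x₂² = 0, and x₁² + x₂² = 1. Hence the set of normalized eigenvalues of A is ℂ \ {0}, which is neither finite nor all of ℂ. -/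
open Complex

/-- The set of normalized eigenvalues of the `2×2×2` tensor `A` with
`Ax² = (x₁² + i x₁x₂, x₁x₂ + i x₂²)`. -/
def normEigSet : Set ℂ :=
  {lam : ℂ | ∃ x₁ x₂ : ℂ,
    x₁ ^ 2 + I * x₁ * x₂ = lam * x₁ ∧
    x₁ * x₂ + I * x₂ ^ 2 = lam * x₂ ∧
    x₁ ^ 2 + x₂ ^ 2 = 1}

/-!
The tensor acts as `Ax² = (x₁ + i x₂) x`, so a normalized `x` (which is nonzero) is an
eigenvector exactly for `λ = x₁ + i x₂`. Since `(x₁ + i x₂)(x₁ - i x₂) = x₁² + x₂² = 1`, such a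
`λ` is a unit, hence nonzero; conversely, for `λ ≠ 0` solving `x₁ + i x₂ = λ`, `x₁ - i x₂ = λ⁻¹`
gives the eigenvector `((λ² + 1)/(2λ), (λ² - 1)/(2iλ))`.
-/

theorem add_I_mul_mul_sub_I_mul (a b : ℂ) : (a + I * b) * (a - I * b) = a ^ 2 + b ^ 2 := by
  linear_combination (-b ^ 2) * I_sq

theorem mem_normEigSet_iff (lam : ℂ) :
    lam ∈ normEigSet ↔ ∃ x₁ x₂ : ℂ, x₁ + I * x₂ = lam ∧ x₁ ^ 2 + x₂ ^ 2 = 1 := by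
  constructor
  · rintro ⟨x₁, x₂, h₁, h₂, hnorm⟩
    refine ⟨x₁, x₂, ?_, hnorm⟩
    have hx₁ : (x₁ + I * x₂ - lam) * x₁ = 0 := by linear_combination h₁
    have hx₂ : (x₁ + I * x₂ - lam) * x₂ = 0 := by linear_combination h₂
    have hx : x₁ ≠ 0 ∨ x₂ ≠ 0 := by
      by_contra! h
      simp [h.1, h.2] at hnorm
    rcases hx with hx | hx
    · exact sub_eq_zero.mp ((mul_eq_zero.mp hx₁).resolve_right hx)
    · exact sub_eq_zero.mp ((mul_eq_zero.mp hx₂).resolve_right hx)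
  · rintro ⟨x₁, x₂, rfl, hnorm⟩
    exact ⟨x₁, x₂, by ring, by ring, hnorm⟩

theorem witness_add_I_mul {lam : ℂ} (hlam : lam ≠ 0) :
    (lam ^ 2 + 1) / (2 * lam) + I * ((lam ^ 2 - 1) / (2 * I * lam)) = lam := by
  field_simp
  ring

theorem witness_sub_I_mul {lam : ℂ} (hlam : lam ≠ 0) :
    (lam ^ 2 + 1) / (2 * lam) - I * ((lam ^ 2 - 1) / (2 * I * lam)) = lam⁻¹ := by
  field_simp
  ring

theorem witness_isNormalizedEigenvector {lam : ℂ} (hlam : lam ≠ 0) :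
    ((lam ^ 2 + 1) / (2 * lam)) ^ 2
        + I * ((lam ^ 2 + 1) / (2 * lam)) * ((lam ^ 2 - 1) / (2 * I * lam))
        = lam * ((lam ^ 2 + 1) / (2 * lam)) ∧
      ((lam ^ 2 + 1) / (2 * lam)) * ((lam ^ 2 - 1) / (2 * I * lam))
        + I * ((lam ^ 2 - 1) / (2 * I * lam)) ^ 2
        = lam * ((lam ^ 2 - 1) / (2 * I * lam)) ∧
      ((lam ^ 2 + 1) / (2 * lam)) ^ 2 + ((lam ^ 2 - 1) / (2 * I * lam)) ^ 2 = 1 := by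
  have hsum := witness_add_I_mul hlam
  refine ⟨?_, ?_, ?_⟩
  · linear_combination ((lam ^ 2 + 1) / (2 * lam)) * hsum
  · linear_combination ((lam ^ 2 - 1) / (2 * I * lam)) * hsum
  · rw [← add_I_mul_mul_sub_I_mul, hsum, witness_sub_I_mul hlam, mul_inv_cancel₀ hlam]

theorem normEigSet_eq_compl_zero : normEigSet = {0}ᶜ := by
  ext lam
  rw [Set.mem_compl_singleton_iff]
  constructor
  · rw [mem_normEigSet_iff]
    rintro ⟨x₁, x₂, rfl, hnorm⟩
    rw [← add_I_mul_mul_sub_I_mul] at hnorm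
    exact left_ne_zero_of_mul_eq_one hnorm
  · exact fun hlam => ⟨_, _, witness_isNormalizedEigenvector hlam⟩

/-- For the `2×2×2` tensor with `Ax² = (x₁² + i x₁x₂, x₁x₂ + i x₂²)`:
every `λ ≠ 0` is a normalized eigenvalue (with eigenvector
`((λ²+1)/(2λ), (λ²−1)/(2iλ))`), `0` is not a normalized eigenvalue, and hence the
set of normalized eigenvalues is `ℂ \ {0}`, which is neither finite nor all of `ℂ`. -/
theorem normalized_eigenvalues_complement_zero :
    (∀ lam : ℂ, lam ≠ 0 →
      ((lam ^ 2 + 1) / (2 * lam)) ^ 2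
          + I * ((lam ^ 2 + 1) / (2 * lam)) * ((lam ^ 2 - 1) / (2 * I * lam))
          = lam * ((lam ^ 2 + 1) / (2 * lam)) ∧
        ((lam ^ 2 + 1) / (2 * lam)) * ((lam ^ 2 - 1) / (2 * I * lam))
          + I * ((lam ^ 2 - 1) / (2 * I * lam)) ^ 2
          = lam * ((lam ^ 2 - 1) / (2 * I * lam)) ∧
        ((lam ^ 2 + 1) / (2 * lam)) ^ 2 + ((lam ^ 2 - 1) / (2 * I * lam)) ^ 2 = 1) ∧
    (¬ ∃ x₁ x₂ : ℂ,
      x₁ ^ 2 + I * x₁ * x₂ = 0 ∧ x₁ * x₂ + I * x₂ ^ 2 = 0 ∧ x₁ ^ 2 + x₂ ^ 2 = 1) ∧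
    normEigSet = {0}ᶜ ∧ ¬ normEigSet.Finite ∧ normEigSet ≠ Set.univ := by
  have zero_not_mem : (0 : ℂ) ∉ normEigSet := by simp [normEigSet_eq_compl_zero]
  refine ⟨fun _ => witness_isNormalizedEigenvector, ?_, normEigSet_eq_compl_zero, ?_, ?_⟩
  · rintro ⟨x₁, x₂, h₁, h₂, hnorm⟩
    exact zero_not_mem ⟨x₁, x₂, by simpa using h₁, by simpa using h₂, hnorm⟩
  · rw [normEigSet_eq_compl_zero]
    exact (Set.finite_singleton 0).infinite_compl
  · exact fun h => zero_not_mem (h ▸ Set.mem_univ 0)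
end

section
/- Let m ≥ 2 and n ≥ 1, and let A be an order-m tensor of format n×⋯×n with complex entries. Then the set E(A) = {λ ∈ ℂ : there exists x ∈ ℂⁿ with Ax^{m-1} = λx and ∑ᵢ xᵢ² = 1} of normalized eigenvalues of A is either finite or has finite complement in ℂ. -/
open Finset

open Polynomial Topology PrimeSpectrum

/-! The normalized eigenpairs are the common zeros of polynomials in `x` whose coefficients are
polynomials in `λ`, so `E(A)` is the set of closed points `(λ - l)` of `Spec ℂ[λ]` lying in the
image of a closed subset of `Spec ℂ[λ][x₁, …, xₙ]`. By Chevalley's theorem that image is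
constructible. A proper closed subset of `Spec ℂ[λ]` contains only the closed points at the roots
of some nonzero polynomial, so every constructible subset meets the closed points in a finite or
cofinite set. Conversely, a prime of `ℂ[λ][x]` over `(λ - l)` lies in a maximal ideal whose
residue field is `ℂ` (Zariski's lemma), and the images of the `xᵢ` there give an eigenvector. -/

def IsFiniteOrCofinite {α : Type*} (s : Set α) : Prop :=
  s.Finite ∨ sᶜ.Finite

theorem IsFiniteOrCofinite.compl {α : Type*} {s : Set α} (hs : IsFiniteOrCofinite s) :
    IsFiniteOrCofinite sᶜ := by
  rw [IsFiniteOrCofinite, compl_compl]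
  exact hs.symm

theorem IsFiniteOrCofinite.union {α : Type*} {s t : Set α} (hs : IsFiniteOrCofinite s)
    (ht : IsFiniteOrCofinite t) : IsFiniteOrCofinite (s ∪ t) := by
  rcases hs with hs | hs
  · rcases ht with ht | ht
    · exact Or.inl (hs.union ht)
    · exact Or.inr (ht.subset (Set.compl_subset_compl.2 Set.subset_union_right))
  · exact Or.inr (hs.subset (Set.compl_subset_compl.2 Set.subset_union_left))

theorem Ideal.exists_algHom_ker_eq_of_isMaximal {k A : Type*} [Field k] [IsAlgClosed k]
    [CommRing A] [Algebra k A] [Algebra.FiniteType k A] (m : Ideal A) [m.IsMaximal] :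
    ∃ φ : A →ₐ[k] k, RingHom.ker φ = m := by
  let := Ideal.Quotient.field m
  have : Module.Finite k (A ⧸ m) := finite_of_finite_type_of_isJacobsonRing k (A ⧸ m)
  let e : k ≃ₐ[k] A ⧸ m :=
    AlgEquiv.ofBijective (Algebra.ofId k _) IsAlgClosed.algebraMap_bijective_of_isIntegral
  refine ⟨e.symm.toAlgHom.comp (Ideal.Quotient.mkₐ k m), ?_⟩
  ext a
  simp [RingHom.mem_ker, Ideal.Quotient.eq_zero_iff_mem]

namespace Polynomial

theorem evalRingHom_comp_C {R : Type*} [CommSemiring R] (l : R) :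
    (evalRingHom l).comp C = RingHom.id R :=
  RingHom.ext fun _ => eval_C

variable {R : Type*} [CommRing R] [IsDomain R]

noncomputable def evalPrime (l : R) : PrimeSpectrum R[X] :=
  ⟨RingHom.ker (evalRingHom l), RingHom.ker_isPrime _⟩

theorem isFiniteOrCofinite_preimage_evalPrime_zeroLocus (t : Set R[X]) :
    IsFiniteOrCofinite (evalPrime ⁻¹' zeroLocus t) := by
  by_cases ht : ∃ p ∈ t, p ≠ 0
  · obtain ⟨p, hp, hp0⟩ := ht
    exact Or.inl ((finite_setOfPred_isRoot hp0).subset fun l hl => hl hp)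
  · push Not at ht
    refine Or.inr (Set.finite_empty.subset fun l hl => hl fun p hp => ?_)
    simp [evalPrime, ht p hp]

theorem _root_.Topology.IsConstructible.isFiniteOrCofinite_preimage_evalPrime
    {s : Set (PrimeSpectrum R[X])} (hs : IsConstructible s) :
    IsFiniteOrCofinite (evalPrime ⁻¹' s) := by
  induction hs using IsConstructible.empty_union_induction with
  | open_retrocompact U hU _ =>
    obtain ⟨t, ht⟩ := (isClosed_iff_zeroLocus _).1 hU.isClosed_compl
    simpa [← ht] using (isFiniteOrCofinite_preimage_evalPrime_zeroLocus t).compl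
  | union s _ t _ hs ht => exact hs.union ht
  | compl s _ hs => exact hs.compl

end Polynomial

section CommonZeros

variable {k σ : Type*} [Field k] [IsAlgClosed k] [Finite σ]

theorem preimage_evalPrime_image_comap_C_zeroLocus (G : Set (MvPolynomial σ k[X])) :
    evalPrime ⁻¹' (comap MvPolynomial.C '' zeroLocus G) =
      {l | ∃ x : σ → k, ∀ g ∈ G, MvPolynomial.eval₂ (evalRingHom l) x g = 0} := by
  ext l
  constructor
  · rintro ⟨Q, hQG, hQl⟩
    obtain ⟨M, hM, hQM⟩ := Ideal.exists_le_maximal _ Q.isPrime.ne_top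
    obtain ⟨φ, hφ⟩ := Ideal.exists_algHom_ker_eq_of_isMaximal (k := k) M
    have hφC : (φ : MvPolynomial σ k[X] →+* k).comp MvPolynomial.C = evalRingHom l := by
      refine Polynomial.ringHom_ext (fun a => by simpa using φ.commutes a) ?_
      have hX : X - Polynomial.C l ∈ (comap MvPolynomial.C Q).asIdeal := by
        simp [hQl, evalPrime]
      have hφX : MvPolynomial.C (X - C l) ∈ RingHom.ker φ := hφ ▸ hQM hX
      have hφl : φ (MvPolynomial.C (C l)) = l := by simpa using φ.commutes l
      simpa [sub_eq_zero, hφl] using RingHom.mem_ker.1 hφX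
    refine ⟨fun i => φ (MvPolynomial.X i), fun g hg => ?_⟩
    have hφeval : MvPolynomial.eval₂Hom (evalRingHom l) (fun i => φ (MvPolynomial.X i)) = φ :=
      MvPolynomial.ringHom_ext (fun r => by simp [← hφC]) fun i => by simp
    have hg : g ∈ RingHom.ker φ := hφ ▸ hQM (hQG hg)
    rwa [← MvPolynomial.coe_eval₂Hom, hφeval]
  · rintro ⟨x, hx⟩
    refine ⟨⟨RingHom.ker (MvPolynomial.eval₂Hom (evalRingHom l) x), RingHom.ker_isPrime _⟩,
      fun g hg => hx g hg, ?_⟩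
    ext1
    simp [RingHom.comap_ker, evalPrime]

theorem isFiniteOrCofinite_setOf_exists_common_zero (G : Set (MvPolynomial σ k[X])) :
    IsFiniteOrCofinite
      {l : k | ∃ x : σ → k, ∀ g ∈ G, MvPolynomial.eval₂ (evalRingHom l) x g = 0} := by
  rw [← preimage_evalPrime_image_comap_C_zeroLocus]
  refine IsConstructible.isFiniteOrCofinite_preimage_evalPrime
    (isConstructible_comap_image (RingHom.finitePresentation_algebraMap.mpr inferInstance) ?_)
  rw [← zeroLocus_span]
  exact ((isRetrocompact_zeroLocus_compl_of_fg (IsNoetherian.noetherian _)).isConstructible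
    (isClosed_zeroLocus _).isOpen_compl).of_compl

end CommonZeros

noncomputable def tApplyPoly (m n : ℕ) (A : (Fin m → Fin n) → ℂ) (j : Fin n) :
    MvPolynomial (Fin n) ℂ :=
  ∑ i : Fin (m - 1) → Fin n,
    MvPolynomial.C (A (fun k => if hk : (k : ℕ) = 0 then j
        else i ⟨(k : ℕ) - 1, by have := k.isLt; omega⟩)) * ∏ l, MvPolynomial.X (i l)

theorem eval_tApplyPoly (m n : ℕ) (A : (Fin m → Fin n) → ℂ) (x : Fin n → ℂ) (j : Fin n) :
    MvPolynomial.eval x (tApplyPoly m n A j) = tApply m n A x j := by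
  simp [tApplyPoly, tApply]

noncomputable def normalizedEigenSystem (m n : ℕ) (A : (Fin m → Fin n) → ℂ) :
    Set (MvPolynomial (Fin n) ℂ[X]) :=
  insert (∑ i, MvPolynomial.X i ^ 2 - 1)
    (Set.range fun j => MvPolynomial.map C (tApplyPoly m n A j) -
      MvPolynomial.C X * MvPolynomial.X j)

theorem setOf_normalizedEigenvalue_eq (m n : ℕ) (A : (Fin m → Fin n) → ℂ) :
    {lam : ℂ | ∃ x : Fin n → ℂ, tApply m n A x = lam • x ∧ ∑ i, x i ^ 2 = 1} =
      {l | ∃ x : Fin n → ℂ, ∀ g ∈ normalizedEigenSystem m n A,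
        MvPolynomial.eval₂ (evalRingHom l) x g = 0} := by
  ext l
  simp [normalizedEigenSystem, MvPolynomial.eval₂_map, evalRingHom_comp_C,
    MvPolynomial.eval₂_id, eval_tApplyPoly, funext_iff, sub_eq_zero, and_comm]

theorem normalized_eigenvalues_finite_or_cofinite_general (m n : ℕ)
    (A : (Fin m → Fin n) → ℂ) :
    let E : Set ℂ := {lam : ℂ | ∃ x : Fin n → ℂ,
      tApply m n A x = lam • x ∧ ∑ i, x i ^ 2 = 1}
    E.Finite ∨ Eᶜ.Finite := by
  intro E
  rw [show E = _ from setOf_normalizedEigenvalue_eq m n A]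
  exact isFiniteOrCofinite_setOf_exists_common_zero _

/-- The set of normalized eigenvalues of a tensor is finite or has finite
complement in `ℂ`. -/
theorem normalized_eigenvalues_finite_or_cofinite (m n : ℕ) (hm : 2 ≤ m) (hn : 1 ≤ n)
    (A : (Fin m → Fin n) → ℂ) :
    let E : Set ℂ := {lam : ℂ | ∃ x : Fin n → ℂ,
      tApply m n A x = lam • x ∧ ∑ i, x i ^ 2 = 1}
    E.Finite ∨ Eᶜ.Finite :=
  normalized_eigenvalues_finite_or_cofinite_general m n A
end

section
/- Let A be the complex 2×2×2 tensor whose nonzero entries are a₁₁₁ = a₂₁₁ = a₂₁₂ = 1, so that Ax² = (x₁², x₁² + x₁x₂). If (λ, x) is any eigenpair of A (i.e., x ∈ ℂ² \ {0} and x₁² = λx₁, x₁² + x₁x₂ = λx₂), then λ = 0 and x₁ = 0. In particular, up to equivalence, the only eigenpair of A is λ = 0 with x = (0,1). -/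
theorem eq_zero_of_sq_eq_mul_of_sq_add_mul_eq_mul {R : Type*} [CommRing R] [IsReduced R]
    {lam x₁ x₂ : R} (h1 : x₁ ^ 2 = lam * x₁) (h2 : x₁ ^ 2 + x₁ * x₂ = lam * x₂) : x₁ = 0 :=
  IsReduced.eq_zero x₁ ⟨3, by linear_combination x₁ * h2 - x₂ * h1⟩

/-- For the `2×2×2` tensor with `Ax² = (x₁², x₁² + x₁x₂)`: every eigenpair has
`λ = 0` and `x₁ = 0`, and in particular is equivalent to the eigenpair
`λ = 0`, `x = (0, 1)`. -/
theorem eigenpairs_of_example (lam : ℂ) (x₁ x₂ : ℂ) (hx : ¬(x₁ = 0 ∧ x₂ = 0))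
    (h1 : x₁ ^ 2 = lam * x₁) (h2 : x₁ ^ 2 + x₁ * x₂ = lam * x₂) :
    (lam = 0 ∧ x₁ = 0) ∧
      ∃ t : ℂ, t ≠ 0 ∧ t * lam = 0 ∧ t * x₁ = 0 ∧ t * x₂ = 1 := by
  obtain rfl : x₁ = 0 := eq_zero_of_sq_eq_mul_of_sq_add_mul_eq_mul h1 h2
  have hx₂ : x₂ ≠ 0 := fun h ↦ hx ⟨rfl, h⟩
  obtain rfl : lam = 0 := (mul_eq_zero.mp (by linear_combination -h2)).resolve_right hx₂
  exact ⟨⟨rfl, rfl⟩, x₂⁻¹, inv_ne_zero hx₂, mul_zero _, mul_zero _, inv_mul_cancel₀ hx₂⟩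
end

section
/- Let m ≥ 3, let f be a homogeneous polynomial of degree m in n variables over ℂ, and let λ ∈ ℂ with λ ≠ 0. Then a point x ∈ ℂⁿ satisfies ∇f(x) = λx and x·x = 1 if and only if x is a singular point of the affine hypersurface defined by g(y) = f(y) − (λ/2)(y·y) − (1/m − 1/2)λ, that is, g(x) = 0 and ∇g(x) = 0. -/
/-!
The gradient of `g` is `∇f - λx`, so `x` is a critical point of `g` exactly when `∇f(x) = λx`.
In that case Euler's identity gives `m f(x) = λ (x·x)`, hence
`g(x) = (1/m - 1/2) λ (x·x - 1)`, which vanishes exactly when `x·x = 1` since `m ≠ 2` and `λ ≠ 0`.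
-/

open MvPolynomial

namespace MvPolynomial

variable {σ K : Type*} [Fintype σ]

theorem IsHomogeneous.sum_mul_eval_pderiv [CommSemiring K] {φ : MvPolynomial σ K} {m : ℕ}
    (hφ : φ.IsHomogeneous m) (x : σ → K) :
    ∑ i, x i * eval x (pderiv i φ) = m * eval x φ := by
  simpa [map_sum, nsmul_eq_mul] using congrArg (eval x) hφ.sum_X_mul_pderiv

theorem pderiv_sum_X_sq [CommSemiring K] (i : σ) :
    pderiv i (∑ j, X j ^ 2 : MvPolynomial σ K) = 2 * X i := by
  rw [map_sum, Finset.sum_eq_single i]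
  · simp
  · intro j _ hj
    simp [pderiv_X_of_ne hj]
  · simp

theorem IsHomogeneous.natCast_mul_eval_eq_of_eval_pderiv_eq_mul [CommSemiring K]
    {φ : MvPolynomial σ K} {m : ℕ} (hφ : φ.IsHomogeneous m) {lam : K} {x : σ → K}
    (heig : ∀ i, eval x (pderiv i φ) = lam * x i) :
    m * eval x φ = lam * ∑ i, x i ^ 2 := by
  rw [← hφ.sum_mul_eval_pderiv, Finset.mul_sum]
  exact Finset.sum_congr rfl fun i _ => by rw [heig]; ring

theorem eval_pderiv_sub_C_half_mul_sum_X_sq_sub_C [Field K] [NeZero (2 : K)]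
    (φ : MvPolynomial σ K) (lam c : K) (x : σ → K) (i : σ) :
    eval x (pderiv i (φ - C (lam / 2) * ∑ j, X j ^ 2 - C c)) =
      eval x (pderiv i φ) - lam * x i := by
  simp only [map_sub, pderiv_C_mul, pderiv_sum_X_sq, pderiv_C, eval_C, map_mul, eval_X,
    map_ofNat, sub_zero]
  field_simp

end MvPolynomial

/-- For `f` homogeneous of degree `m ≥ 3` and `λ ≠ 0`: a point `x` is a normalized
eigenvector with eigenvalue `λ` (i.e. `∇f(x) = λ x` and `x·x = 1`) iff `x` is a
singular point of the affine hypersurface defined by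
`g(y) = f(y) - (λ/2)(y·y) - (1/m - 1/2)λ`. -/
theorem normalized_eigenvector_iff_singular (m n : ℕ) (hm : 3 ≤ m)
    (f : MvPolynomial (Fin n) ℂ) (hf : f.IsHomogeneous m)
    (lam : ℂ) (hlam : lam ≠ 0) (x : Fin n → ℂ) :
    let g : MvPolynomial (Fin n) ℂ :=
      f - C (lam / 2) * ∑ i, X i ^ 2 - C ((1 / (m : ℂ) - 1 / 2) * lam)
    ((∀ i, eval x (pderiv i f) = lam * x i) ∧ ∑ i, x i ^ 2 = 1) ↔
      (eval x g = 0 ∧ ∀ i, eval x (pderiv i g) = 0) := by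
  intro g
  have hm0 : (m : ℂ) ≠ 0 := by exact_mod_cast (by omega : m ≠ 0)
  have hm2 : (m : ℂ) ≠ 2 := by exact_mod_cast (by omega : m ≠ 2)
  have hcrit : (∀ i, eval x (pderiv i g) = 0) ↔ ∀ i, eval x (pderiv i f) = lam * x i := by
    simp only [g, eval_pderiv_sub_C_half_mul_sum_X_sq_sub_C, sub_eq_zero]
  rw [hcrit, and_comm (a := eval x g = 0)]
  refine and_congr_right fun heig => ?_
  have hval : eval x g = (1 / (m : ℂ) - 1 / 2) * lam * (∑ i, x i ^ 2 - 1) := by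
    have heuler := hf.natCast_mul_eval_eq_of_eval_pderiv_eq_mul heig
    simp only [g, map_sub, map_mul, eval_C, map_sum, map_pow, eval_X]
    field_simp
    linear_combination 2 * heuler
  simp [hval, hm2, hlam, sub_eq_zero]
end

section
/- Let A be the symmetric complex 3×3×3 tensor with nonzero entries a₁₁₁ = 2 and a₁₂₂ = a₂₁₂ = a₂₂₁ = a₁₃₃ = a₃₁₃ = a₃₃₁ = 1, so that Ax² = (2x₁² + x₂² + x₃², 2x₁x₂, 2x₁x₃). Then: (1) for every α ∈ ℂ, the vector x = (1, iα, α) satisfies Ax² = 2x and x·x = x₁²+x₂²+x₃² = 1, so 2 is a normalized eigenvalue of A; and (2) for every real number r with 0 < r ≤ 2, there exist λ ∈ ℂ and x ∈ ℂ³ with Ax² = λx, ∑ᵢ xᵢ·conj(xᵢ) = 1, and |λ| = r. -/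
open Complex ComplexConjugate

/-! The map is `Ax² = (2x₁² + x₂² + x₃², 2x₁x₂, 2x₁x₃)`, so any `x = (λ/2, y, z)` with
`y² + z² = 0` is an eigenvector for `λ`; the isotropic line `z = i y` supplies such `y, z`.
Its bilinear length `x·x = λ²/4` is pinned by `λ`, but its Hermitian length `|λ|²/4 + 2|y|²`
is not, so for real `0 < λ ≤ 2` a suitable real `y` makes it `1`. -/

theorem I_mul_sq_add_sq (α : ℂ) : (I * α) ^ 2 + α ^ 2 = 0 := by
  rw [mul_pow, I_sq]
  ring

theorem eigen_equations_of_isotropic {lam x₁ y z : ℂ} (hx₁ : 2 * x₁ = lam)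
    (hyz : y ^ 2 + z ^ 2 = 0) :
    2 * x₁ ^ 2 + y ^ 2 + z ^ 2 = lam * x₁ ∧ 2 * x₁ * y = lam * y ∧ 2 * x₁ * z = lam * z := by
  subst hx₁
  refine ⟨?_, rfl, rfl⟩
  linear_combination hyz

theorem hermitian_sq_real_isotropic (a s : ℝ) :
    (a : ℂ) * conj (a : ℂ) + (I * s) * conj (I * s) + s * conj (s : ℂ) =
      ((a ^ 2 + 2 * s ^ 2 : ℝ) : ℂ) := by
  simp only [mul_conj, normSq_ofReal, normSq_mul, normSq_I]
  push_cast
  ring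

/-- For the symmetric `3×3×3` tensor with `Ax² = (2x₁² + x₂² + x₃², 2x₁x₂, 2x₁x₃)`:
(1) for every `α ∈ ℂ` the vector `(1, iα, α)` is a normalized eigenvector with
eigenvalue `2`; (2) for every real `0 < r ≤ 2` there is an eigenpair `(λ, x)` with
Hermitian unit norm `∑ xᵢ conj(xᵢ) = 1` and `|λ| = r`. -/
theorem hermitian_eigenvalue_magnitudes :
    (∀ α : ℂ,
      2 * (1 : ℂ) ^ 2 + (I * α) ^ 2 + α ^ 2 = 2 * 1 ∧
      2 * 1 * (I * α) = 2 * (I * α) ∧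
      2 * 1 * α = 2 * α ∧
      (1 : ℂ) ^ 2 + (I * α) ^ 2 + α ^ 2 = 1) ∧
    (∃ x₁ x₂ x₃ : ℂ,
      2 * x₁ ^ 2 + x₂ ^ 2 + x₃ ^ 2 = 2 * x₁ ∧
      2 * x₁ * x₂ = 2 * x₂ ∧
      2 * x₁ * x₃ = 2 * x₃ ∧
      x₁ ^ 2 + x₂ ^ 2 + x₃ ^ 2 = 1) ∧
    (∀ r : ℝ, 0 < r → r ≤ 2 →
      ∃ (lam : ℂ) (x₁ x₂ x₃ : ℂ),
        2 * x₁ ^ 2 + x₂ ^ 2 + x₃ ^ 2 = lam * x₁ ∧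
        2 * x₁ * x₂ = lam * x₂ ∧
        2 * x₁ * x₃ = lam * x₃ ∧
        x₁ * (starRingEnd ℂ) x₁ + x₂ * (starRingEnd ℂ) x₂ + x₃ * (starRingEnd ℂ) x₃ = 1 ∧
        ‖lam‖ = r) := by
  have eigen_two (α : ℂ) := eigen_equations_of_isotropic (lam := 2) (mul_one 2) (I_mul_sq_add_sq α)
  refine ⟨fun α => ⟨eigen_two α |>.1, eigen_two α |>.2.1, eigen_two α |>.2.2, ?_⟩,
    ⟨1, I * 0, 0, eigen_two 0 |>.1, eigen_two 0 |>.2.1, eigen_two 0 |>.2.2, by simp⟩, ?_⟩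
  · rw [add_assoc, I_mul_sq_add_sq, one_pow, add_zero]
  intro r hr hr2
  set s := Real.sqrt ((1 - (r / 2) ^ 2) / 2)
  have hs : (r / 2) ^ 2 + 2 * s ^ 2 = 1 := by
    rw [Real.sq_sqrt (by nlinarith)]
    ring
  have heigen := eigen_equations_of_isotropic (lam := r) (x₁ := ((r / 2 : ℝ) : ℂ))
    (by push_cast; ring) (I_mul_sq_add_sq s)
  refine ⟨r, (r / 2 : ℝ), I * s, s, heigen.1, heigen.2.1, heigen.2.2, ?_, ?_⟩
  · rw [hermitian_sq_real_isotropic, hs, ofReal_one]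
  · rw [norm_real, Real.norm_of_nonneg hr.le]
end

section
/- Let f(x,y,z) = z⁶ + x⁴y² + x²y⁴ − 3x²y²z², the Motzkin polynomial, viewed as a homogeneous polynomial of degree 6 in 3 variables over ℂ. Then the set of normalized eigenvalues {λ ∈ ℂ : there exists v ∈ ℂ³ with ∇f(v) = λv and v·v = 1} equals {0, 3/32, 3/2, 6}. In particular all normalized eigenvalues are real and non-negative. -/
/-!
Writing `p = x²`, `q = y²`, `r = z²`, the eigen-equation for each coordinate reads
`x · E(p, q, r) = λ x`, which over a domain is equivalent to `p · (E(p, q, r) - λ) = 0`. So the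
normalized eigenvalues are those of a polynomial system in the squares, symmetric under
`p ↔ q`, and every solution of that system lifts back since every complex number is a square.
A case split on which of `p`, `q` vanish leaves, when both are nonzero, the difference of
the first two equations `2 (q - p) (p + q - 3 r) = 0`, and each branch pins down `λ`.
-/

open MvPolynomial

/-- The Motzkin polynomial `z⁶ + x⁴y² + x²y⁴ − 3x²y²z²` as a polynomial in the
variables `X 0 = x`, `X 1 = y`, `X 2 = z` over `ℂ`. -/
noncomputable def motzkin : MvPolynomial (Fin 3) ℂ :=
  X 2 ^ 6 + X 0 ^ 4 * X 1 ^ 2 + X 0 ^ 2 * X 1 ^ 4 - 3 * X 0 ^ 2 * X 1 ^ 2 * X 2 ^ 2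

def normalizedEigenvalues {R σ : Type*} [CommRing R] [Fintype σ] (f : MvPolynomial σ R) :
    Set R :=
  {lam | ∃ v : σ → R, (∀ i, eval v (pderiv i f) = lam * v i) ∧ ∑ i, v i ^ 2 = 1}

section Gradient

variable (v : Fin 3 → ℂ)

lemma eval_pderiv_motzkin_zero :
    eval v (pderiv 0 motzkin) =
      v 0 * (4 * v 0 ^ 2 * v 1 ^ 2 + 2 * (v 1 ^ 2) ^ 2 - 6 * v 1 ^ 2 * v 2 ^ 2) := by
  simp [motzkin, pderiv_X, ← map_ofNat C 3]; ring

lemma eval_pderiv_motzkin_one :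
    eval v (pderiv 1 motzkin) =
      v 1 * (2 * (v 0 ^ 2) ^ 2 + 4 * v 0 ^ 2 * v 1 ^ 2 - 6 * v 0 ^ 2 * v 2 ^ 2) := by
  simp [motzkin, pderiv_X, ← map_ofNat C 3]; ring

lemma eval_pderiv_motzkin_two :
    eval v (pderiv 2 motzkin) = v 2 * (6 * (v 2 ^ 2) ^ 2 - 6 * v 0 ^ 2 * v 1 ^ 2) := by
  simp [motzkin, pderiv_X, ← map_ofNat C 3]; ring

end Gradient

structure MotzkinSqEigenpair (lam p q r : ℂ) : Prop where
  eq_x : p * (4 * p * q + 2 * q ^ 2 - 6 * q * r - lam) = 0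
  eq_y : q * (2 * p ^ 2 + 4 * p * q - 6 * p * r - lam) = 0
  eq_z : r * (6 * r ^ 2 - 6 * p * q - lam) = 0
  add_add_eq_one : p + q + r = 1

lemma mul_eq_mul_left_iff_sq_mul_sub_eq_zero {R : Type*} [CommRing R] [NoZeroDivisors R]
    (a b c : R) : a * b = c * a ↔ a ^ 2 * (b - c) = 0 := by
  rw [← sub_eq_zero, mul_comm c, ← mul_sub]
  simp only [mul_eq_zero, pow_eq_zero_iff two_ne_zero]

lemma isEigenpair_motzkin_iff (lam : ℂ) (v : Fin 3 → ℂ) :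
    ((∀ i, eval v (pderiv i motzkin) = lam * v i) ∧ ∑ i, v i ^ 2 = 1) ↔
      MotzkinSqEigenpair lam (v 0 ^ 2) (v 1 ^ 2) (v 2 ^ 2) := by
  simp only [Fin.forall_fin_succ, IsEmpty.forall_iff, and_true, Fin.sum_univ_three,
    Fin.succ_zero_eq_one, Fin.succ_one_eq_two, eval_pderiv_motzkin_zero,
    eval_pderiv_motzkin_one, eval_pderiv_motzkin_two, mul_eq_mul_left_iff_sq_mul_sub_eq_zero]
  exact ⟨fun ⟨⟨h0, h1, h2⟩, hn⟩ => ⟨h0, h1, h2, hn⟩, fun ⟨h0, h1, h2, hn⟩ => ⟨⟨h0, h1, h2⟩, hn⟩⟩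

lemma mem_normalizedEigenvalues_motzkin_iff (lam : ℂ) :
    lam ∈ normalizedEigenvalues motzkin ↔ ∃ p q r, MotzkinSqEigenpair lam p q r := by
  constructor
  · rintro ⟨v, hv⟩
    exact ⟨_, _, _, (isEigenpair_motzkin_iff lam v).1 hv⟩
  · rintro ⟨p, q, r, h⟩
    obtain ⟨x, rfl⟩ := IsAlgClosed.exists_pow_nat_eq p two_pos
    obtain ⟨y, rfl⟩ := IsAlgClosed.exists_pow_nat_eq q two_pos
    obtain ⟨z, rfl⟩ := IsAlgClosed.exists_pow_nat_eq r two_pos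
    exact ⟨![x, y, z], (isEigenpair_motzkin_iff lam _).2 h⟩

namespace MotzkinSqEigenpair

variable {lam p q r : ℂ}

lemma swap (h : MotzkinSqEigenpair lam p q r) : MotzkinSqEigenpair lam q p r where
  eq_x := by linear_combination h.eq_y
  eq_y := by linear_combination h.eq_x
  eq_z := by linear_combination h.eq_z
  add_add_eq_one := by linear_combination h.add_add_eq_one

lemma eigenvalue_of_left_eq_zero (h : MotzkinSqEigenpair lam p q r) (hp : p = 0) :
    lam = 0 ∨ lam = 6 := by
  subst hp
  by_cases hq : q = 0
  · subst hq
    have hr : r = 1 := by linear_combination h.add_add_eq_one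
    subst hr
    right; linear_combination -h.eq_z
  · left
    have hq_lam : q * lam = 0 := by linear_combination -h.eq_y
    exact (mul_eq_zero.1 hq_lam).resolve_left hq

lemma eigenvalue_of_left_eq_right (h : MotzkinSqEigenpair lam p q r) (hp : p ≠ 0)
    (hpq : q = p) : lam = 0 ∨ lam = 3 / 2 := by
  subst hpq
  have hlam : lam = 6 * q ^ 2 - 6 * q * r := by
    linear_combination -((mul_eq_zero.1 h.eq_y).resolve_left hp)
  by_cases hr : r = 0
  · subst hr
    have hq : q = 1 / 2 := by linear_combination h.add_add_eq_one / 2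
    right; rw [hlam, hq]; norm_num
  · have hz := (mul_eq_zero.1 h.eq_z).resolve_left hr
    have hfactor : (r - q) * (r + 2 * q) = 0 := by linear_combination (hz + hlam) / 6
    rcases mul_eq_zero.1 hfactor with hrq | hrq
    · left; linear_combination hlam - 6 * q * hrq
    · exact absurd (show (1 : ℂ) = 0 by linear_combination hrq - h.add_add_eq_one) one_ne_zero

lemma eigenvalue_of_add_eq (h : MotzkinSqEigenpair lam p q r) (hp : p ≠ 0)
    (hpq : p + q = 3 * r) : lam = 3 / 32 := by
  have hr : r = 1 / 4 := by linear_combination (h.add_add_eq_one - hpq) / 4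
  subst hr
  have hx := (mul_eq_zero.1 h.eq_x).resolve_left hp
  have hz := (mul_eq_zero.1 h.eq_z).resolve_left (by norm_num)
  linear_combination (-hz - 3 * hx + 6 * q * hpq) / 4

lemma eigenvalue_mem (h : MotzkinSqEigenpair lam p q r) :
    lam ∈ ({0, 3 / 32, 3 / 2, 6} : Set ℂ) := by
  simp only [Set.mem_insert_iff, Set.mem_singleton_iff]
  by_cases hp : p = 0
  · rcases h.eigenvalue_of_left_eq_zero hp with h0 | h6 <;> simp [*]
  by_cases hq : q = 0
  · rcases h.swap.eigenvalue_of_left_eq_zero hq with h0 | h6 <;> simp [*]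
  have hdiff : (q - p) * (p + q - 3 * r) = 0 := by
    linear_combination ((mul_eq_zero.1 h.eq_x).resolve_left hp -
      (mul_eq_zero.1 h.eq_y).resolve_left hq) / 2
  rcases mul_eq_zero.1 hdiff with hpq | hpq
  · rcases h.eigenvalue_of_left_eq_right hp (by linear_combination hpq) with h0 | h32 <;>
      simp [*]
  · simp [h.eigenvalue_of_add_eq hp (by linear_combination hpq)]

end MotzkinSqEigenpair

lemma exists_motzkinSqEigenpair_three_div_thirtyTwo :
    ∃ p q r, MotzkinSqEigenpair (3 / 32) p q r := by
  obtain ⟨s, hs⟩ := IsAlgClosed.exists_pow_nat_eq (3 / 8 : ℂ) two_pos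
  -- `p` and `q` are the roots of `t² - (3/4) t + 3/64`, whose discriminant is `3/8`
  refine ⟨(3 / 4 + s) / 2, (3 / 4 - s) / 2, 1 / 4, ?_, ?_, ?_, ?_⟩
  · linear_combination (-(3 / 4 + s) / 4) * hs
  · linear_combination (-(3 / 4 - s) / 4) * hs
  · linear_combination (3 / 8) * hs
  · ring

lemma normalizedEigenvalues_motzkin : normalizedEigenvalues motzkin = {0, 3 / 32, 3 / 2, 6} := by
  ext lam
  rw [mem_normalizedEigenvalues_motzkin_iff]
  refine ⟨fun ⟨p, q, r, h⟩ => h.eigenvalue_mem, ?_⟩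
  simp only [Set.mem_insert_iff, Set.mem_singleton_iff]
  rintro (rfl | rfl | rfl | rfl)
  · exact ⟨1, 0, 0, by constructor <;> norm_num⟩
  · exact exists_motzkinSqEigenpair_three_div_thirtyTwo
  · exact ⟨1 / 2, 1 / 2, 0, by constructor <;> norm_num⟩
  · exact ⟨0, 0, 1, by constructor <;> norm_num⟩

/-- The set of normalized eigenvalues of the symmetric tensor corresponding to
the Motzkin polynomial is `{0, 3/32, 3/2, 6}`; in particular all normalized
eigenvalues are real and non-negative. -/
theorem motzkin_normalized_eigenvalues :
    {lam : ℂ | ∃ v : Fin 3 → ℂ,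
        (∀ i, eval v (pderiv i motzkin) = lam * v i) ∧ ∑ i, v i ^ 2 = 1}
      = {0, 3 / 32, 3 / 2, 6} ∧
    ∀ lam ∈ {lam : ℂ | ∃ v : Fin 3 → ℂ,
        (∀ i, eval v (pderiv i motzkin) = lam * v i) ∧ ∑ i, v i ^ 2 = 1},
      lam.im = 0 ∧ 0 ≤ lam.re := by
  refine ⟨normalizedEigenvalues_motzkin, fun lam hlam => ?_⟩
  change lam ∈ normalizedEigenvalues motzkin at hlam
  rw [normalizedEigenvalues_motzkin] at hlam
  rcases hlam with rfl | rfl | rfl | rfl <;> norm_num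
end

section
/- Let a, b be real numbers, not both zero, and consider the 2×2×2 tensor A over ℂ with Ax² = (a(x₁² + x₂²), b(x₁² + x₂²)). Then every normalized eigenpair of A, i.e., every (λ, x) ∈ ℂ × ℂ² with Ax² = λx and x₁² + x₂² = 1, satisfies λ² = a² + b² and x = (a/λ, b/λ). In particular, A has only finitely many normalized eigenvalues. -/
/-! Substituting `x₁² + x₂² = 1` into the eigen-equations gives `λx = (a, b)`, so
`λ² = λ²(x₁² + x₂²) = a² + b²`, which is nonzero for real `a, b` not both zero. Hence
`λ ≠ 0`, `x = (a/λ, b/λ)`, and `λ` is one of the two square roots of `a² + b²`. -/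

lemma Set.finite_setOf_pow_eq {R : Type*} [CommRing R] [IsDomain R] {n : ℕ} (hn : 0 < n)
    (c : R) : {x : R | x ^ n = c}.Finite := by
  classical
  refine (Polynomial.nthRootsFinset n c).finite_toSet.subset fun x hx => ?_
  exact (Polynomial.mem_nthRootsFinset hn c).2 hx

lemma Complex.ofReal_sq_add_sq_ne_zero {a b : ℝ} (hab : ¬(a = 0 ∧ b = 0)) :
    (a : ℂ) ^ 2 + (b : ℂ) ^ 2 ≠ 0 := by
  have hreal : a * a + b * b ≠ 0 := mul_self_add_mul_self_eq_zero.not.2 hab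
  exact_mod_cast (by simpa only [sq] using hreal : a ^ 2 + b ^ 2 ≠ 0)

section Eigenpair

variable {K : Type*} [Field K] {a b lam x₁ x₂ : K}

lemma sq_eq_sq_add_sq_of_eigenpair (h₁ : a * (x₁ ^ 2 + x₂ ^ 2) = lam * x₁)
    (h₂ : b * (x₁ ^ 2 + x₂ ^ 2) = lam * x₂) (hx : x₁ ^ 2 + x₂ ^ 2 = 1) :
    lam ^ 2 = a ^ 2 + b ^ 2 := by
  rw [hx, mul_one] at h₁ h₂
  linear_combination -lam ^ 2 * hx - (a + lam * x₁) * h₁ - (b + lam * x₂) * h₂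

lemma eq_div_of_eigen_equation {c x : K} (h : c * (x₁ ^ 2 + x₂ ^ 2) = lam * x)
    (hx : x₁ ^ 2 + x₂ ^ 2 = 1) (hlam : lam ≠ 0) : x = c / lam :=
  eq_div_of_mul_eq hlam (by rw [mul_comm, ← h, hx, mul_one])

lemma eigenpair_eq_of_sq_add_sq_ne_zero (hab : a ^ 2 + b ^ 2 ≠ 0)
    (h₁ : a * (x₁ ^ 2 + x₂ ^ 2) = lam * x₁) (h₂ : b * (x₁ ^ 2 + x₂ ^ 2) = lam * x₂)
    (hx : x₁ ^ 2 + x₂ ^ 2 = 1) :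
    lam ^ 2 = a ^ 2 + b ^ 2 ∧ x₁ = a / lam ∧ x₂ = b / lam := by
  have hsq := sq_eq_sq_add_sq_of_eigenpair h₁ h₂ hx
  have hlam : lam ≠ 0 := by
    rintro rfl
    exact hab (by simpa using hsq.symm)
  exact ⟨hsq, eq_div_of_eigen_equation h₁ hx hlam, eq_div_of_eigen_equation h₂ hx hlam⟩

end Eigenpair

/-- For real `a, b` not both zero and the `2×2×2` tensor with
`Ax² = (a(x₁²+x₂²), b(x₁²+x₂²))`: every normalized eigenpair `(λ, x)` satisfies
`λ² = a² + b²` and `x = (a/λ, b/λ)`; in particular the set of normalized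
eigenvalues is finite. -/
theorem singular_tensor_finitely_many_normalized_eigenvalues
    (a b : ℝ) (hab : ¬(a = 0 ∧ b = 0)) :
    (∀ (lam x₁ x₂ : ℂ),
      (a : ℂ) * (x₁ ^ 2 + x₂ ^ 2) = lam * x₁ →
      (b : ℂ) * (x₁ ^ 2 + x₂ ^ 2) = lam * x₂ →
      x₁ ^ 2 + x₂ ^ 2 = 1 →
      lam ^ 2 = (a : ℂ) ^ 2 + (b : ℂ) ^ 2 ∧ x₁ = (a : ℂ) / lam ∧ x₂ = (b : ℂ) / lam) ∧
    {lam : ℂ | ∃ x₁ x₂ : ℂ,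
        (a : ℂ) * (x₁ ^ 2 + x₂ ^ 2) = lam * x₁ ∧
        (b : ℂ) * (x₁ ^ 2 + x₂ ^ 2) = lam * x₂ ∧
        x₁ ^ 2 + x₂ ^ 2 = 1}.Finite := by
  have eigenpair := fun (lam x₁ x₂ : ℂ) =>
    eigenpair_eq_of_sq_add_sq_ne_zero (lam := lam) (x₁ := x₁) (x₂ := x₂)
      (Complex.ofReal_sq_add_sq_ne_zero hab)
  refine ⟨eigenpair, (Set.finite_setOf_pow_eq two_pos ((a : ℂ) ^ 2 + (b : ℂ) ^ 2)).subset ?_⟩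
  rintro lam ⟨x₁, x₂, h₁, h₂, hx⟩
  exact (eigenpair lam x₁ x₂ h₁ h₂ hx).1
end
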